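/- arXiv:1307.1839 — 5 statements merged into one kernel-verified Lean document; each statement's English description precedes it below -/
import Mathlib

section
/- Let A be the free associative K-algebra on d generators of degree 1, and let I be the homogeneous ideal generated by homogeneous elements f_1, f_2, … with r_i elements of degree i (r_1 = 0). If for infinitely many natural numbers m there exists a real number t_m > 0 such that 1 - d·t_m + Σ_{i=2}^{m} r_i·t_m^i < 0, then A/I is infinite dimensional over K. -/
/-
If `A/I` is finite dimensional then, `I` being spanned by homogeneous elements, its degree-`n`
part `I_n` (spanned by the products `u * f * v` of words and relations) is all of `A_n = V ^ n`
for `n ≥ N`. Let `C_k` be a complement of `I_k` in `A_k` and `b_k = dim C_k`, so `b_0 = 1` and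
`b_n = 0` for `n ≥ N`. A term `u * f * v` of `I_{n+1}` lies in `V * I_n` unless `u` is empty,
and `f * A_k ⊆ V * I_n + f * C_k`; hence `dim I_{n+1} ≤ d dim I_n + ∑_{i+k=n+1} r_i b_k`,
and since `dim A_{n+1} = d dim A_n` this reads `d b_n ≤ b_{n+1} + ∑_{i+k=n+1} r_i b_k`.
For `m ≥ N` this says that `(1 - d X + ∑_{i≤m} r_i X^i) * ∑ b_k X^k` has nonnegative
coefficients and constant term `1`, so evaluating at `t ≥ 0` gives
`1 - d t + ∑_{i≤m} r_i t^i > 0`.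
-/

open Module Submodule DirectSum Finset.HasAntidiagonal
open scoped Pointwise

section

variable {K : Type*} [Field K]

theorem Submodule.finrank_mul_le {A : Type*} [Ring A] [Algebra K A] (M N : Submodule K A)
    [FiniteDimensional K M] [FiniteDimensional K N] :
    finrank K ↥(M * N) ≤ finrank K M * finrank K N := by
  rw [← mulMap_range, ← finrank_tensorProduct]
  exact LinearMap.finrank_range_le _

instance Submodule.finiteDimensional_mul {A : Type*} [Ring A] [Algebra K A] (M N : Submodule K A)
    [FiniteDimensional K M] [FiniteDimensional K N] : FiniteDimensional K ↥(M * N) := by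
  rw [← mulMap_range]
  infer_instance

theorem Submodule.finrank_finset_sup_le {ι V : Type*} [AddCommGroup V] [Module K V]
    (s : Finset ι) (N : ι → Submodule K V) [∀ i, FiniteDimensional K (N i)] :
    finrank K ↥(s.sup N) ≤ ∑ i ∈ s, finrank K (N i) := by
  classical
  induction s using Finset.induction_on with
  | empty => simp
  | insert a s ha ih =>
    rw [Finset.sup_insert, Finset.sum_insert ha]
    exact (finrank_add_le_finrank_add_finrank _ _).trans (Nat.add_le_add_left ih _)

theorem Submodule.exists_sup_eq_and_finrank_add_eq {V : Type*} [AddCommGroup V] [Module K V]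
    {U W : Submodule K V} (h : U ≤ W) [FiniteDimensional K W] :
    ∃ C : Submodule K V, U ⊔ C = W ∧ finrank K U + finrank K C = finrank K W := by
  obtain ⟨C', hC'⟩ := U.exists_isCompl
  have hsup : U ⊔ C' ⊓ W = W := by rw [← sup_inf_assoc_of_le _ h, hC'.sup_eq_top, top_inf_eq]
  have hinf : U ⊓ (C' ⊓ W) = ⊥ :=
    eq_bot_iff.mpr <| hC'.inf_eq_bot ▸ inf_le_inf_left _ inf_le_left
  have : FiniteDimensional K U := finiteDimensional_of_le h
  have : FiniteDimensional K ↥(C' ⊓ W) := finiteDimensional_of_le inf_le_right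
  refine ⟨C' ⊓ W, hsup, ?_⟩
  rw [← finrank_sup_add_finrank_inf_eq, hsup, hinf, finrank_bot, add_zero]

end

theorem GradedAlgebra.exists_le_map_proj_of_finite_quotient {R A : Type*} [CommRing R] [Ring A]
    [Algebra R A] (𝒜 : ℕ → Submodule R A) [GradedAlgebra 𝒜] (I : Submodule R A)
    [Module.Finite R (A ⧸ I)] :
    ∃ N, ∀ n, N ≤ n → 𝒜 n ≤ I.map (GradedAlgebra.proj 𝒜 n) := by
  have htop : (⊤ : Submodule R (A ⧸ I)) ≤ ⨆ n, (𝒜 n).map I.mkQ := by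
    rw [← Submodule.map_iSup, (Decomposition.isInternal 𝒜).submodule_iSup_eq_top,
      Submodule.map_top, range_mkQ]
  obtain ⟨s, hs⟩ := CompleteLattice.IsCompactElement.exists_finset_of_le_iSup _
    ((fg_iff_compact _).mp Module.Finite.fg_top) _ htop
  refine ⟨s.sup id + 1, fun n hn x hx => ?_⟩
  have hns : n ∉ s := fun h => by have := Finset.le_sup (f := id) h; simp at this; omega
  obtain ⟨y, hy, hyx⟩ : ∃ y ∈ ⨆ i ∈ s, 𝒜 i, I.mkQ y = I.mkQ x := by
    rw [← mem_map]
    simp only [Submodule.map_iSup]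
    exact hs mem_top
  have hy0 : GradedAlgebra.proj 𝒜 n y = 0 := by
    refine (iSup₂_le fun i hi z hz => ?_ : ⨆ i ∈ s, 𝒜 i ≤ LinearMap.ker _) hy
    exact decompose_of_mem_ne 𝒜 hz (ne_of_mem_of_not_mem hi hns)
  refine ⟨x - y, ?_, ?_⟩
  · show x - y ∈ I
    rw [← Submodule.Quotient.eq]; exact hyx.symm
  · rw [map_sub, hy0, sub_zero, GradedAlgebra.proj_apply, decompose_of_mem_same 𝒜 hx]

section

open Finset Polynomial

theorem Polynomial.eval_nonneg_of_coeff_nonneg {R : Type*} [Semiring R] [PartialOrder R]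
    [IsOrderedRing R] {p : R[X]} (hp : ∀ n, 0 ≤ p.coeff n) {t : R} (ht : 0 ≤ t) :
    0 ≤ p.eval t := by
  rw [eval_eq_sum_range]
  exact sum_nonneg fun n _ => mul_nonneg (hp n) (pow_nonneg ht n)

theorem Polynomial.eval_pos_of_coeff_nonneg {R : Type*} [Semiring R] [PartialOrder R]
    [IsStrictOrderedRing R] {p : R[X]} (hp : ∀ n, 0 ≤ p.coeff n) (h0 : 0 < p.coeff 0) {t : R}
    (ht : 0 ≤ t) : 0 < p.eval t := by
  rw [eval_eq_sum_range]
  exact sum_pos' (fun n _ => mul_nonneg (hp n) (pow_nonneg ht n))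
    ⟨0, mem_range.mpr (Nat.succ_pos _), by simpa using h0⟩

theorem Polynomial.coeff_sum_range_monomial {R : Type*} [Semiring R] (N : ℕ) (b : ℕ → R)
    (n : ℕ) :
    (∑ j ∈ range N, monomial j (b j)).coeff n = if n < N then b n else 0 := by
  simp [finsetSum_coeff, coeff_monomial]

theorem one_sub_mul_add_sum_pos {d : ℝ} {r b : ℕ → ℝ} {N m : ℕ} (hr : ∀ i, 0 ≤ r i)
    (hb : ∀ n, 0 ≤ b n) (hb0 : b 0 = 1) (hbN : ∀ n, N ≤ n → b n = 0)
    (hrec : ∀ n, d * b n ≤ b (n + 1) + ∑ p ∈ antidiagonal (n + 1), r p.1 * b p.2)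
    (hNm : N ≤ m) {t : ℝ} (ht : 0 ≤ t) :
    0 < 1 - d * t + ∑ i ∈ range (m + 1), r i * t ^ i := by
  set B : ℝ[X] := ∑ j ∈ range N, monomial j (b j)
  set Rm : ℝ[X] := ∑ i ∈ range (m + 1), monomial i (r i)
  have hB : ∀ n, B.coeff n = b n := fun n => by
    rw [coeff_sum_range_monomial]; split_ifs with h
    · rfl
    · exact (hbN n (not_lt.mp h)).symm
  have hRm : ∀ i, Rm.coeff i = if i ≤ m then r i else 0 := fun i => by
    simp only [Rm, coeff_sum_range_monomial, Nat.lt_succ_iff]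
  have hRm_nonneg : ∀ i, 0 ≤ Rm.coeff i := fun i => by
    rw [hRm]; split_ifs
    exacts [hr i, le_rfl]
  have hEB0 : 0 < ((1 - C d * X + Rm) * B).coeff 0 := by
    rw [mul_coeff_zero, hB, hb0]
    simp only [coeff_add, coeff_sub, coeff_one_zero, coeff_C_mul, coeff_X_zero]
    linarith [hRm_nonneg 0]
  have hEB : ∀ n, 0 ≤ ((1 - C d * X + Rm) * B).coeff n := by
    rintro (_ | n)
    · exact hEB0.le
    have : ((1 - C d * X + Rm) * B).coeff (n + 1) =
        b (n + 1) - d * b n + ∑ p ∈ antidiagonal (n + 1), Rm.coeff p.1 * b p.2 := by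
      rw [add_mul, sub_mul, one_mul, mul_assoc, coeff_add, coeff_sub, coeff_C_mul, coeff_X_mul,
        coeff_mul]
      simp only [hB]
    rw [this]
    -- Past degree `m` the truncation `Rm` no longer matches `hrec`, but there `b` vanishes.
    rcases le_or_gt (n + 1) m with hnm | hnm
    · have hsum : ∑ p ∈ antidiagonal (n + 1), Rm.coeff p.1 * b p.2 =
          ∑ p ∈ antidiagonal (n + 1), r p.1 * b p.2 :=
        sum_congr rfl fun p hp => by
          rw [hRm, if_pos ((Nat.le.intro (mem_antidiagonal.mp hp)).trans hnm)]
      linarith [hrec n]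
    · rw [hbN n (by omega), hbN (n + 1) (by omega), mul_zero, sub_zero, zero_add]
      exact sum_nonneg fun p _ => mul_nonneg (hRm_nonneg _) (hb _)
  have hpos := eval_pos_of_coeff_nonneg hEB hEB0 ht
  rw [eval_mul] at hpos
  have : (1 - C d * X + Rm).eval t = 1 - d * t + ∑ i ∈ range (m + 1), r i * t ^ i := by
    simp [Rm, eval_finsetSum]
  rw [← this]
  exact pos_of_mul_pos_left hpos (eval_nonneg_of_coeff_nonneg (fun n => (hB n).symm ▸ hb n) ht)

end

namespace FreeAlgebra

section

variable (R X : Type*) [CommSemiring R]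

def degreeOne : Submodule R (FreeAlgebra R X) := span R (Set.range (ι R))

variable {R X}

theorem ι_mem_degreeOne_pow_one (x : X) : ι R x ∈ degreeOne R X ^ 1 := by
  rw [pow_one]; exact subset_span (Set.mem_range_self x)

variable (R X) in
def GradedAlgebra.ι : X → ⨁ n : ℕ, (degreeOne R X ^ n : Submodule R (FreeAlgebra R X)) :=
  fun x => of (fun n : ℕ => ↥(degreeOne R X ^ n)) 1
    ⟨FreeAlgebra.ι R x, ι_mem_degreeOne_pow_one x⟩

theorem lift_gradedAlgebra_ι_of_mem {m : FreeAlgebra R X} (hm : m ∈ degreeOne R X) :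
    lift R (GradedAlgebra.ι R X) m =
      lof R ℕ (fun n : ℕ => ↥(degreeOne R X ^ n)) 1
        ⟨m, (pow_one (degreeOne R X)).symm ▸ hm⟩ := by
  induction hm using Submodule.span_induction with
  | mem m hm => obtain ⟨x, rfl⟩ := hm; exact lift_ι_apply _ _
  | zero => simp only [map_zero]; exact (map_zero _).symm
  | add m m' _ _ ih ih' => rw [map_add, ih, ih', ← map_add]; rfl
  | smul r m _ ih => rw [map_smul, ih, ← map_smul]; rfl

instance gradedAlgebra :
    GradedAlgebra (degreeOne R X ^ · : ℕ → Submodule R (FreeAlgebra R X)) :=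
  GradedAlgebra.ofAlgHom _ (lift R (GradedAlgebra.ι R X))
    (by ext x; simp [GradedAlgebra.ι])
    fun i x => by
    obtain ⟨x, hx⟩ := x
    induction hx using Submodule.pow_induction_on_left' with
    | algebraMap r => rw [AlgHom.commutes, DirectSum.algebraMap_apply]; rfl
    | add x y i hx hy ihx ihy => rw [map_add, ihx, ihy, ← map_add]; rfl
    | mem_mul m hm i x hx ih =>
      rw [map_mul, ih, lift_gradedAlgebra_ι_of_mem hm, lof_eq_of, of_mul_of]
      exact of_eq_of_gradedMonoid_eq (Sigma.subtype_ext (add_comm _ _) rfl)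

variable (R) in
def word {n : ℕ} (f : Fin n → X) : FreeAlgebra R X := (List.ofFn fun i => ι R (f i)).prod

theorem word_cons {n : ℕ} (x : X) (f : Fin n → X) :
    word R (Fin.cons x f : Fin (n + 1) → X) = ι R x * word R f := by
  simp [word, List.ofFn_succ]

theorem degreeOne_pow_eq_span_word (n : ℕ) :
    degreeOne R X ^ n = span R (Set.range (word R : (Fin n → X) → FreeAlgebra R X)) := by
  induction n with
  | zero => rw [pow_zero, one_eq_span, Set.range_unique]; rfl
  | succ n ih =>
    rw [pow_succ', ih, degreeOne, span_mul_span]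
    congr 1
    ext y
    constructor
    · rintro ⟨_, ⟨x, rfl⟩, _, ⟨f, rfl⟩, rfl⟩
      exact ⟨Fin.cons x f, word_cons x f⟩
    · rintro ⟨f, rfl⟩
      rw [← Fin.cons_self_tail f, word_cons]
      exact Set.mul_mem_mul (Set.mem_range_self _) (Set.mem_range_self _)

theorem word_eq_basisFreeMonoid {n : ℕ} (f : Fin n → X) :
    word R f = basisFreeMonoid R X (FreeMonoid.ofList (List.ofFn f)) := by
  simp [basisFreeMonoid, word, equivMonoidAlgebraFreeMonoid, FreeMonoid.lift_apply]
  rfl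

theorem linearIndependent_word (n : ℕ) :
    LinearIndependent R (word R : (Fin n → X) → FreeAlgebra R X) := by
  have hinj : Function.Injective fun f : Fin n → X => FreeMonoid.ofList (List.ofFn f) :=
    fun f g h => List.ofFn_injective (FreeMonoid.ofList.injective h)
  convert (basisFreeMonoid R X).linearIndependent.comp _ hinj using 1
  funext f
  exact word_eq_basisFreeMonoid f

theorem finrank_degreeOne_pow (K : Type*) [Field K] [Fintype X] (n : ℕ) :
    Module.finrank K ↥(degreeOne K X ^ n) = Fintype.card X ^ n := by
  rw [degreeOne_pow_eq_span_word, finrank_span_eq_card (linearIndependent_word n),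
    Fintype.card_fun, Fintype.card_fin]

instance finiteDimensional_degreeOne (K : Type*) [Field K] [Finite X] :
    FiniteDimensional K (degreeOne K X) :=
  FiniteDimensional.span_of_finite K (Set.finite_range _)

instance finiteDimensional_degreeOne_pow (K : Type*) [Field K] [Finite X] (n : ℕ) :
    FiniteDimensional K ↥(degreeOne K X ^ n) := by
  rw [degreeOne_pow_eq_span_word]
  exact FiniteDimensional.span_of_finite K (Set.finite_range _)

variable {G : ℕ → Submodule R (FreeAlgebra R X)}

variable (G) in
def idealComponent (n : ℕ) : Submodule R (FreeAlgebra R X) :=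
  ⨆ (j : ℕ) (i : ℕ) (k : ℕ) (_ : j + i + k = n), degreeOne R X ^ j * G i * degreeOne R X ^ k

theorem le_idealComponent {j i k n : ℕ} (h : j + i + k = n) :
    degreeOne R X ^ j * G i * degreeOne R X ^ k ≤ idealComponent G n :=
  le_iSup₂_of_le j i <| le_iSup₂_of_le k h le_rfl

theorem idealComponent_le_pow (hG : ∀ i, G i ≤ degreeOne R X ^ i) (n : ℕ) :
    idealComponent G n ≤ degreeOne R X ^ n :=
  iSup₂_le fun j i => iSup₂_le fun k h => by
    rw [← h, pow_add, pow_add]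
    gcongr
    exact hG i

theorem pow_mul_idealComponent_le (a n : ℕ) :
    degreeOne R X ^ a * idealComponent G n ≤ idealComponent G (a + n) := by
  simp only [idealComponent, mul_iSup]
  refine iSup₂_le fun j i => iSup₂_le fun k h => ?_
  rw [← mul_assoc, ← mul_assoc, ← pow_add]
  exact le_idealComponent (by omega)

theorem idealComponent_zero (hG0 : G 0 = ⊥) : idealComponent G 0 = ⊥ :=
  eq_bot_iff.mpr <| iSup₂_le fun j i => iSup₂_le fun k h => by
    obtain rfl : i = 0 := by omega
    rw [hG0, mul_bot, bot_mul]

theorem span_mul_mul_eq_iSup_idealComponent (F : ℕ → Set (FreeAlgebra R X)) :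
    span R {x | ∃ a s b : FreeAlgebra R X, (∃ i, s ∈ F i) ∧ x = a * s * b} =
      ⨆ n, idealComponent (fun i => span R (F i)) n := by
  have hsum : (⨆ n, degreeOne R X ^ n) = ⊤ :=
    (Decomposition.isInternal (degreeOne R X ^ · : ℕ → Submodule R _)).submodule_iSup_eq_top
  apply le_antisymm
  · refine span_le.mpr ?_
    rintro _ ⟨a, s, b, ⟨i, hs⟩, rfl⟩
    have : ⊤ * span R (F i) * ⊤ ≤ ⨆ n, idealComponent (fun i => span R (F i)) n := by
      rw [← hsum]
      simp only [iSup_mul, mul_iSup]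
      refine iSup₂_le fun k j => ?_
      exact (le_idealComponent (G := fun i => span R (F i)) (j := j) (k := k) rfl).trans
        (le_iSup _ _)
    have hmem : a * s * b ∈ ⊤ * span R (F i) * ⊤ :=
      Submodule.mul_mem_mul (Submodule.mul_mem_mul mem_top (subset_span hs)) mem_top
    exact this hmem
  · refine iSup_le fun n => iSup₂_le fun j i => iSup₂_le fun k _ => ?_
    calc degreeOne R X ^ j * span R (F i) * degreeOne R X ^ k
        ≤ span R Set.univ * span R (F i) * span R Set.univ := by gcongr <;> simp
      _ = span R (Set.univ * F i * Set.univ) := by rw [span_mul_span, span_mul_span]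
      _ ≤ _ := span_mono <| by
        rintro _ ⟨_, ⟨a, -, s, hs, rfl⟩, b, -, rfl⟩
        exact ⟨a, s, b, ⟨i, hs⟩, rfl⟩

theorem map_proj_iSup_idealComponent_le (hG : ∀ i, G i ≤ degreeOne R X ^ i) (n : ℕ) :
    (⨆ m, idealComponent G m).map (GradedAlgebra.proj (degreeOne R X ^ ·) n) ≤
      idealComponent G n := by
  rw [Submodule.map_iSup]
  refine iSup_le fun m => ?_
  rintro _ ⟨x, hx, rfl⟩
  have hx' := idealComponent_le_pow hG m hx
  obtain rfl | hmn := eq_or_ne m n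
  · rwa [GradedAlgebra.proj_apply, decompose_of_mem_same _ hx']
  · rw [GradedAlgebra.proj_apply, decompose_of_mem_ne _ hx' hmn]
    exact zero_mem _

theorem idealComponent_succ_le (hG : ∀ i, G i ≤ degreeOne R X ^ i) (hG0 : G 0 = ⊥)
    {C : ℕ → Submodule R (FreeAlgebra R X)}
    (hC : ∀ k, idealComponent G k ⊔ C k = degreeOne R X ^ k) (n : ℕ) :
    idealComponent G (n + 1) ≤ degreeOne R X * idealComponent G n ⊔
      (antidiagonal (n + 1)).sup fun p => G p.1 * C p.2 := by
  refine iSup₂_le fun j i => iSup₂_le fun k h => ?_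
  rcases j with _ | j
  · rcases i with _ | i
    · simp [hG0]
    rw [pow_zero, one_mul, ← hC k, Submodule.mul_sup]
    refine sup_le_sup ?_ (Finset.le_sup (f := fun p => G p.1 * C p.2) (b := (i + 1, k))
      (mem_antidiagonal.mpr (by omega)))
    calc G (i + 1) * idealComponent G k
        ≤ degreeOne R X * degreeOne R X ^ i * idealComponent G k := by
          rw [← pow_succ']; gcongr; exact hG _
      _ ≤ degreeOne R X * idealComponent G n := by
          rw [mul_assoc]
          gcongr
          exact (pow_mul_idealComponent_le i k).trans_eq (by congr 1; omega)
  · refine le_sup_of_le_left ?_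
    rw [pow_succ', mul_assoc, mul_assoc, ← mul_assoc (degreeOne R X ^ j)]
    gcongr
    exact le_idealComponent (by omega)

end

section

variable {K X : Type*} [Field K] [Fintype X] {G : ℕ → Submodule K (FreeAlgebra K X)}

variable (G) in
noncomputable def hilbertFunction (n : ℕ) : ℕ :=
  finrank K ↥(degreeOne K X ^ n) - finrank K (idealComponent G n)

theorem hilbertFunction_zero (hG0 : G 0 = ⊥) : hilbertFunction G 0 = 1 := by
  rw [hilbertFunction, idealComponent_zero hG0, finrank_bot, finrank_degreeOne_pow, pow_zero,
    Nat.sub_zero]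

theorem hilbertFunction_eq_zero (hG : ∀ i, G i ≤ degreeOne K X ^ i) {n : ℕ}
    (h : degreeOne K X ^ n ≤ idealComponent G n) : hilbertFunction G n = 0 := by
  have : FiniteDimensional K (idealComponent G n) :=
    Submodule.finiteDimensional_of_le (idealComponent_le_pow hG n)
  exact Nat.sub_eq_zero_of_le (Submodule.finrank_mono h)

theorem finrank_idealComponent_succ_le (hG : ∀ i, G i ≤ degreeOne K X ^ i) (hG0 : G 0 = ⊥)
    {C : ℕ → Submodule K (FreeAlgebra K X)}
    (hC : ∀ k, idealComponent G k ⊔ C k = degreeOne K X ^ k) (n : ℕ) :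
    finrank K (idealComponent G (n + 1)) ≤ Fintype.card X * finrank K (idealComponent G n) +
      ∑ p ∈ antidiagonal (n + 1), finrank K (G p.1) * finrank K (C p.2) := by
  have : ∀ i, FiniteDimensional K (G i) := fun i => Submodule.finiteDimensional_of_le (hG i)
  have : ∀ k, FiniteDimensional K (C k) :=
    fun k => Submodule.finiteDimensional_of_le ((le_sup_right).trans (hC k).le)
  have : ∀ k, FiniteDimensional K (idealComponent G k) :=
    fun k => Submodule.finiteDimensional_of_le (idealComponent_le_pow hG k)
  have hV : finrank K (degreeOne K X) = Fintype.card X := by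
    rw [← pow_one (degreeOne K X), finrank_degreeOne_pow, pow_one]
  calc finrank K (idealComponent G (n + 1))
      ≤ finrank K ↥(degreeOne K X * idealComponent G n ⊔
          (antidiagonal (n + 1)).sup fun p => G p.1 * C p.2) :=
        Submodule.finrank_mono (idealComponent_succ_le hG hG0 hC n)
    _ ≤ finrank K ↥(degreeOne K X * idealComponent G n) +
          finrank K ↥((antidiagonal (n + 1)).sup fun p => G p.1 * C p.2) :=
        Submodule.finrank_add_le_finrank_add_finrank _ _
    _ ≤ _ := by
      gcongr
      · exact hV ▸ Submodule.finrank_mul_le _ _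
      · exact (Submodule.finrank_finset_sup_le _ _).trans
          (Finset.sum_le_sum fun p _ => Submodule.finrank_mul_le _ _)

theorem card_mul_hilbertFunction_le (hG : ∀ i, G i ≤ degreeOne K X ^ i) (hG0 : G 0 = ⊥)
    (n : ℕ) :
    Fintype.card X * hilbertFunction G n ≤ hilbertFunction G (n + 1) +
      ∑ p ∈ antidiagonal (n + 1), finrank K (G p.1) * hilbertFunction G p.2 := by
  choose C hC hdim using fun k =>
    Submodule.exists_sup_eq_and_finrank_add_eq (idealComponent_le_pow hG k)
  have hCk : ∀ k, finrank K (C k) = hilbertFunction G k := fun k => by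
    rw [hilbertFunction, ← hdim k]; omega
  have hrec := finrank_idealComponent_succ_le hG hG0 hC n
  have h1 := hdim n
  have h2 := hdim (n + 1)
  simp only [hCk, finrank_degreeOne_pow] at hrec h1 h2
  rw [pow_succ', ← h1, mul_add] at h2
  linarith

end

end FreeAlgebra

open FreeAlgebra in
/-- Golod–Shafarevich criterion: let `A` be the free associative `K`-algebra on `d`
generators of degree one, and `I` the two-sided ideal generated by homogeneous
elements (the finitely many elements of `F i` having degree `i`, with `r i` of them,
`r 1 = 0`).  If for infinitely many `m` there is `t_m > 0` with
`1 - d t_m + ∑_{i=2}^m r_i t_m^i < 0`, then `A/I` is infinite dimensional over `K`. -/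
theorem stmt1 {K : Type*} [Field K] (d : ℕ)
    (V : Submodule K (FreeAlgebra K (Fin d)))
    (hV : V = Submodule.span K (Set.range (FreeAlgebra.ι K)))
    (F : ℕ → Finset (FreeAlgebra K (Fin d)))
    (hhom : ∀ i, (F i : Set (FreeAlgebra K (Fin d))) ⊆ (V ^ i : Submodule K (FreeAlgebra K (Fin d))))
    (r : ℕ → ℕ) (hr : ∀ i, r i = (F i).card) (hr0 : r 0 = 0) (hr1 : r 1 = 0)
    (I : Submodule K (FreeAlgebra K (Fin d)))
    (hI : I = Submodule.span K
      {x : FreeAlgebra K (Fin d) | ∃ a s b : FreeAlgebra K (Fin d), (∃ i, s ∈ F i) ∧ x = a * s * b})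
    (hGS : ∀ N : ℕ, ∃ m ≥ N, ∃ t : ℝ, 0 < t ∧
      1 - (d : ℝ) * t + ∑ i ∈ Finset.Icc 2 m, (r i : ℝ) * t ^ i < 0) :
    ¬ FiniteDimensional K (FreeAlgebra K (Fin d) ⧸ I) := by
  intro hfin
  subst hV
  set G : ℕ → Submodule K (FreeAlgebra K (Fin d)) := fun i => span K (F i : Set _)
  have hG : ∀ i, G i ≤ degreeOne K (Fin d) ^ i := fun i => span_le.mpr (hhom i)
  have hG0 : G 0 = ⊥ := by simp [G, Finset.card_eq_zero.mp ((hr 0).symm.trans hr0)]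
  have hIG : I = ⨆ n, idealComponent G n := by
    rw [hI, ← span_mul_mul_eq_iSup_idealComponent]
    simp
  obtain ⟨N, hN⟩ :=
    GradedAlgebra.exists_le_map_proj_of_finite_quotient (degreeOne K (Fin d) ^ ·) I
  have hvanish : ∀ n, N ≤ n → hilbertFunction G n = 0 := fun n hn =>
    hilbertFunction_eq_zero hG ((hN n hn).trans (hIG ▸ map_proj_iSup_idealComponent_le hG n))
  have hrec : ∀ n, d * hilbertFunction G n ≤ hilbertFunction G (n + 1) +
      ∑ p ∈ antidiagonal (n + 1), r p.1 * hilbertFunction G p.2 := fun n => by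
    refine (Fintype.card_fin d ▸ card_mul_hilbertFunction_le hG hG0 n).trans ?_
    gcongr with p
    exact (hr p.1).symm ▸ finrank_span_finset_le_card _
  obtain ⟨m, hm, t, ht, hneg⟩ := hGS N
  have hpos := one_sub_mul_add_sum_pos (d := d) (r := fun i => r i)
    (b := fun n => hilbertFunction G n) (fun i => Nat.cast_nonneg _) (fun n => Nat.cast_nonneg _)
    (by simp [hilbertFunction_zero hG0]) (fun n hn => by simp [hvanish n hn])
    (fun n => by exact_mod_cast hrec n) hm ht.le
  have hsum : ∑ i ∈ Finset.Icc 2 m, (r i : ℝ) * t ^ i =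
      ∑ i ∈ Finset.range (m + 1), (r i : ℝ) * t ^ i := by
    refine Finset.sum_subset (fun i hi => ?_) fun i hi hi' => ?_
    · rw [Finset.mem_Icc] at hi
      exact Finset.mem_range.mpr (by omega)
    obtain rfl | rfl : i = 0 ∨ i = 1 := by
      rw [Finset.mem_range] at hi
      rw [Finset.mem_Icc] at hi'
      omega
    · simp [hr0]
    · simp [hr1]
  linarith
end

section
/- Let A be the free associative K-algebra on x, y (degree 1). Suppose for every m ≥ 1 subspaces U(2^m), V(2^m) of A(2^m) satisfy: V(2^m) is spanned by monomials; V(2^m) ⊕ U(2^m) = A(2^m); A(2^{m-1})U(2^{m-1}) + U(2^{m-1})A(2^{m-1}) ⊆ U(2^m); and V(2^m) ⊆ V(2^{m-1})V(2^{m-1}), where V(2^0) = Kx + Ky, U(2^0) = 0. Define E(k) = { r ∈ A(k) : A r A ∩ A(2^{n+1}) ⊆ U(2^n)A(2^n) + A(2^n)U(2^n) } where 2^{n-1} ≤ k < 2^n, and E = ⊕_k E(k). Then E is a two-sided ideal of A. -/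
/-- The degree-`k` homogeneous component `A(k)` of the free `K`-algebra `A` on two
degree-one generators `x, y`. -/
noncomputable def Adeg (K : Type*) [Field K] (k : ℕ) : Submodule K (FreeAlgebra K (Fin 2)) :=
  (Submodule.span K (Set.range (FreeAlgebra.ι K))) ^ k

/-- `x` is a monomial of `A`, i.e. a product of generators. -/
def IsMonomial (K : Type*) [Field K] (x : FreeAlgebra K (Fin 2)) : Prop :=
  ∃ l : List (Fin 2), x = (l.map (FreeAlgebra.ι K)).prod

/-- The homogeneous component `E(k)`: for `k ≥ 1` and `n` with `2^{n-1} ≤ k < 2^n`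
(so `n = log₂ k + 1`), `E(k) = { r ∈ A(k) : A r A ∩ A(2^{n+1}) ⊆ U(2^n)A(2^n) + A(2^n)U(2^n) }`,
expressed via `A(i) r A(j) ⊆ U(2^n)A(2^n) + A(2^n)U(2^n)` for all `i + k + j = 2^{n+1}`.
Here `U m` plays the role of `U(2^m)`. -/
noncomputable def Edeg (K : Type*) [Field K] (U : ℕ → Submodule K (FreeAlgebra K (Fin 2)))
    (k : ℕ) : Submodule K (FreeAlgebra K (Fin 2)) :=
  Adeg K k ⊓ ⨅ (i : ℕ) (j : ℕ) (_ : i + k + j = 2 ^ (Nat.log 2 k + 2))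
    (a : FreeAlgebra K (Fin 2)) (_ : a ∈ Adeg K i)
    (b : FreeAlgebra K (Fin 2)) (_ : b ∈ Adeg K j),
    Submodule.comap ((LinearMap.mulRight K b).comp (LinearMap.mulLeft K a))
      (U (Nat.log 2 k + 1) * Adeg K (2 ^ (Nat.log 2 k + 1)) +
        Adeg K (2 ^ (Nat.log 2 k + 1)) * U (Nat.log 2 k + 1))

/-- `E = ⊕_{k ≥ 1} E(k)`. -/
noncomputable def Eideal (K : Type*) [Field K]
    (U : ℕ → Submodule K (FreeAlgebra K (Fin 2))) : Submodule K (FreeAlgebra K (Fin 2)) :=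
  ⨆ (k : ℕ) (_ : 1 ≤ k), Edeg K U k

/-
Write `W(N) = U(2^N)A(2^N) + A(2^N)U(2^N)` (`UA K U N` below). The absorption property
`A(2^N)U(2^N) + U(2^N)A(2^N) ⊆ U(2^{N+1})` gives `A(2^{N+1})W(N) + W(N)A(2^{N+1}) ⊆ W(N+1)` and
`A(2^N)W(N)A(2^N) ⊆ W(N+1)`. Hence if `A(p) r A(q) ⊆ W(N)` whenever `p + k + q = 2^{N+1}`, with
`k < 2^N`, the same holds one level up: a word of length `2^{N+2}` around `r` either has a block
of length `2^{N+1}` on one side of `r`, or a block of length `2^N` on both sides. So the defining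
condition of `E(k)` propagates to all higher levels, in particular to the level of `E(k+1)`,
and `E` is stable under multiplication by the generators on either side.
-/

theorem Adeg_add (K : Type*) [Field K] (a b : ℕ) : Adeg K (a + b) = Adeg K a * Adeg K b :=
  pow_add _ a b

theorem ι_mem_Adeg_one (K : Type*) [Field K] (i : Fin 2) : FreeAlgebra.ι K i ∈ Adeg K 1 := by
  rw [Adeg, pow_one]
  exact Submodule.subset_span ⟨i, rfl⟩

theorem Submodule.mul_span_singleton_mul_le_iff {R A : Type*} [CommSemiring R] [Semiring A]
    [Algebra R A] {M N P : Submodule R A} {x : A} :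
    M * span R {x} * N ≤ P ↔ ∀ a ∈ M, ∀ b ∈ N, a * x * b ∈ P := by
  simp only [mul_le, mem_mul_span_singleton, forall_exists_index, and_imp]
  exact ⟨fun h a ha b hb => h _ a ha rfl b hb, fun h _ a ha hax b hb => hax ▸ h a ha b hb⟩

namespace FreeAlgebra

variable {R X : Type*} [CommSemiring R] {S : Submodule R (FreeAlgebra R X)}

theorem mul_mem_of_forall_ι_mul_mem (hS : ∀ i, ∀ x ∈ S, ι R i * x ∈ S)
    (a : FreeAlgebra R X) {x : FreeAlgebra R X} (hx : x ∈ S) : a * x ∈ S := by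
  induction a generalizing x with
  | grade0 r => simpa only [← Algebra.smul_def] using S.smul_mem r hx
  | grade1 i => exact hS i x hx
  | mul a b iha ihb => simpa only [mul_assoc] using iha (ihb hx)
  | add a b iha ihb => simpa only [add_mul] using add_mem (iha hx) (ihb hx)

theorem mul_mem_of_forall_mul_ι_mem (hS : ∀ i, ∀ x ∈ S, x * ι R i ∈ S)
    (a : FreeAlgebra R X) {x : FreeAlgebra R X} (hx : x ∈ S) : x * a ∈ S := by
  induction a generalizing x with
  | grade0 r => simpa only [← Algebra.commutes, ← Algebra.smul_def] using S.smul_mem r hx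
  | grade1 i => exact hS i x hx
  | mul a b iha ihb => simpa only [mul_assoc] using ihb (iha hx)
  | add a b iha ihb => simpa only [mul_add] using add_mem (iha hx) (ihb hx)

end FreeAlgebra

section Levels

variable {K : Type*} [Field K] {U : ℕ → Submodule K (FreeAlgebra K (Fin 2))}

variable (K U) in
noncomputable def UA (N : ℕ) : Submodule K (FreeAlgebra K (Fin 2)) :=
  U N * Adeg K (2 ^ N) + Adeg K (2 ^ N) * U N

theorem Adeg_mul_le_succ (habs : ∀ m, Adeg K (2 ^ m) * U m + U m * Adeg K (2 ^ m) ≤ U (m + 1))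
    (N : ℕ) : Adeg K (2 ^ N) * U N ≤ U (N + 1) :=
  le_trans le_sup_left (habs N)

theorem mul_Adeg_le_succ (habs : ∀ m, Adeg K (2 ^ m) * U m + U m * Adeg K (2 ^ m) ≤ U (m + 1))
    (N : ℕ) : U N * Adeg K (2 ^ N) ≤ U (N + 1) :=
  le_trans le_sup_right (habs N)

theorem UA_le_succ (habs : ∀ m, Adeg K (2 ^ m) * U m + U m * Adeg K (2 ^ m) ≤ U (m + 1))
    (N : ℕ) : UA K U N ≤ U (N + 1) :=
  sup_le (mul_Adeg_le_succ habs N) (Adeg_mul_le_succ habs N)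

theorem Adeg_sq (N : ℕ) : Adeg K (2 ^ N) * Adeg K (2 ^ N) = Adeg K (2 ^ (N + 1)) := by
  rw [← Adeg_add, ← two_mul, pow_succ']

theorem UA_mul_Adeg_le (habs : ∀ m, Adeg K (2 ^ m) * U m + U m * Adeg K (2 ^ m) ≤ U (m + 1))
    (N : ℕ) : UA K U N * Adeg K (2 ^ (N + 1)) ≤ UA K U (N + 1) :=
  le_trans (mul_le_mul_left (UA_le_succ habs N) _) le_sup_left

theorem Adeg_mul_UA_le (habs : ∀ m, Adeg K (2 ^ m) * U m + U m * Adeg K (2 ^ m) ≤ U (m + 1))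
    (N : ℕ) : Adeg K (2 ^ (N + 1)) * UA K U N ≤ UA K U (N + 1) :=
  le_trans (mul_le_mul_right (UA_le_succ habs N) _) le_sup_right

theorem Adeg_mul_UA_mul_Adeg_le
    (habs : ∀ m, Adeg K (2 ^ m) * U m + U m * Adeg K (2 ^ m) ≤ U (m + 1)) (N : ℕ) :
    Adeg K (2 ^ N) * UA K U N * Adeg K (2 ^ N) ≤ UA K U (N + 1) := by
  have hsplit : Adeg K (2 ^ N) * UA K U N * Adeg K (2 ^ N) =
      Adeg K (2 ^ N) * U N * (Adeg K (2 ^ N) * Adeg K (2 ^ N)) +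
        Adeg K (2 ^ N) * Adeg K (2 ^ N) * (U N * Adeg K (2 ^ N)) := by
    simp only [UA, mul_add, add_mul, mul_assoc]
  rw [hsplit, Adeg_sq]
  exact add_le_add (mul_le_mul_left (Adeg_mul_le_succ habs N) _)
    (mul_le_mul_right (mul_Adeg_le_succ habs N) _)

end Levels

section Sandwiched

variable {K : Type*} [Field K] {U : ℕ → Submodule K (FreeAlgebra K (Fin 2))}

variable (K U) in
def Sandwiched (N k : ℕ) (S : Submodule K (FreeAlgebra K (Fin 2))) : Prop :=
  ∀ p q, p + k + q = 2 ^ (N + 1) → Adeg K p * S * Adeg K q ≤ UA K U N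

namespace Sandwiched

variable {N k : ℕ} {S T : Submodule K (FreeAlgebra K (Fin 2))}

theorem mono (hST : S ≤ T) (hT : Sandwiched K U N k T) : Sandwiched K U N k S :=
  fun p q hpq => le_trans (mul_le_mul_left (mul_le_mul_right hST _) _) (hT p q hpq)

theorem Adeg_one_mul (hS : Sandwiched K U N k S) : Sandwiched K U N (k + 1) (Adeg K 1 * S) := by
  intro p q hpq
  simpa only [Adeg_add, mul_assoc] using hS (p + 1) q (by omega)

theorem mul_Adeg_one (hS : Sandwiched K U N k S) : Sandwiched K U N (k + 1) (S * Adeg K 1) := by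
  intro p q hpq
  simpa only [Adeg_add, mul_assoc] using hS p (1 + q) (by omega)

theorem succ (habs : ∀ m, Adeg K (2 ^ m) * U m + U m * Adeg K (2 ^ m) ≤ U (m + 1))
    (hk : k < 2 ^ N) (hS : Sandwiched K U N k S) : Sandwiched K U (N + 1) k S := by
  intro p q hpq
  by_cases hq : 2 ^ (N + 1) ≤ q
  · obtain ⟨q, rfl⟩ : ∃ q', q = q' + 2 ^ (N + 1) := ⟨q - 2 ^ (N + 1), by omega⟩
    calc Adeg K p * S * Adeg K (q + 2 ^ (N + 1))
        = Adeg K p * S * Adeg K q * Adeg K (2 ^ (N + 1)) := by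
          rw [Adeg_add, mul_assoc _ _ (Adeg K _)]
      _ ≤ UA K U N * Adeg K (2 ^ (N + 1)) := mul_le_mul_left (hS p q (by omega)) _
      _ ≤ UA K U (N + 1) := UA_mul_Adeg_le habs N
  by_cases hp : 2 ^ (N + 1) ≤ p
  · obtain ⟨p, rfl⟩ : ∃ p', p = 2 ^ (N + 1) + p' := ⟨p - 2 ^ (N + 1), by omega⟩
    calc Adeg K (2 ^ (N + 1) + p) * S * Adeg K q
        = Adeg K (2 ^ (N + 1)) * (Adeg K p * S * Adeg K q) := by simp only [Adeg_add, mul_assoc]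
      _ ≤ Adeg K (2 ^ (N + 1)) * UA K U N := mul_le_mul_right (hS p q (by omega)) _
      _ ≤ UA K U (N + 1) := Adeg_mul_UA_le habs N
  obtain ⟨p, rfl⟩ : ∃ p', p = 2 ^ N + p' := ⟨p - 2 ^ N, by omega⟩
  obtain ⟨q, rfl⟩ : ∃ q', q = q' + 2 ^ N := ⟨q - 2 ^ N, by omega⟩
  calc Adeg K (2 ^ N + p) * S * Adeg K (q + 2 ^ N)
      = Adeg K (2 ^ N) * (Adeg K p * S * Adeg K q) * Adeg K (2 ^ N) := by
        simp only [Adeg_add, mul_assoc]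
    _ ≤ Adeg K (2 ^ N) * UA K U N * Adeg K (2 ^ N) :=
        mul_le_mul_left (mul_le_mul_right (hS p q (by omega)) _) _
    _ ≤ UA K U (N + 1) := Adeg_mul_UA_mul_Adeg_le habs N

theorem of_le (habs : ∀ m, Adeg K (2 ^ m) * U m + U m * Adeg K (2 ^ m) ≤ U (m + 1))
    {M : ℕ} (hk : k < 2 ^ N) (hS : Sandwiched K U N k S) (hNM : N ≤ M) :
    Sandwiched K U M k S := by
  induction M, hNM using Nat.le_induction with
  | base => exact hS
  | succ M hNM ih =>
    exact ih.succ habs (hk.trans_le (Nat.pow_le_pow_right two_pos hNM))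

end Sandwiched

end Sandwiched

section Ideal

variable {K : Type*} [Field K] {U : ℕ → Submodule K (FreeAlgebra K (Fin 2))} {k : ℕ}
  {x g : FreeAlgebra K (Fin 2)}

theorem mem_Edeg_iff :
    x ∈ Edeg K U k ↔
      x ∈ Adeg K k ∧ Sandwiched K U (Nat.log 2 k + 1) k (Submodule.span K {x}) := by
  simp only [Edeg, Sandwiched, Submodule.mem_inf, Submodule.mem_iInf, Submodule.mem_comap,
    LinearMap.coe_comp, Function.comp_apply, LinearMap.mulLeft_apply, LinearMap.mulRight_apply,
    Submodule.mul_span_singleton_mul_le_iff]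
  rfl

theorem Sandwiched.of_mem_Edeg
    (habs : ∀ m, Adeg K (2 ^ m) * U m + U m * Adeg K (2 ^ m) ≤ U (m + 1))
    (hx : x ∈ Edeg K U k) : Sandwiched K U (Nat.log 2 (k + 1) + 1) k (Submodule.span K {x}) :=
  (mem_Edeg_iff.mp hx).2.of_le habs (Nat.lt_pow_succ_log_self one_lt_two k)
    (Nat.succ_le_succ (Nat.log_mono_right k.le_succ))

theorem mul_mem_Edeg_succ_left
    (habs : ∀ m, Adeg K (2 ^ m) * U m + U m * Adeg K (2 ^ m) ≤ U (m + 1))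
    (hg : g ∈ Adeg K 1) (hx : x ∈ Edeg K U k) : g * x ∈ Edeg K U (k + 1) := by
  have hspan : Submodule.span K {g * x} ≤ Adeg K 1 * Submodule.span K {x} :=
    Submodule.span_le.mpr <| Set.singleton_subset_iff.mpr <|
      Submodule.mul_mem_mul hg (Submodule.mem_span_singleton_self x)
  refine mem_Edeg_iff.mpr ⟨?_, ((Sandwiched.of_mem_Edeg habs hx).Adeg_one_mul).mono hspan⟩
  rw [add_comm, Adeg_add]
  exact Submodule.mul_mem_mul hg (mem_Edeg_iff.mp hx).1

theorem mul_mem_Edeg_succ_right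
    (habs : ∀ m, Adeg K (2 ^ m) * U m + U m * Adeg K (2 ^ m) ≤ U (m + 1))
    (hg : g ∈ Adeg K 1) (hx : x ∈ Edeg K U k) : x * g ∈ Edeg K U (k + 1) := by
  have hspan : Submodule.span K {x * g} ≤ Submodule.span K {x} * Adeg K 1 :=
    Submodule.span_le.mpr <| Set.singleton_subset_iff.mpr <|
      Submodule.mul_mem_mul (Submodule.mem_span_singleton_self x) hg
  refine mem_Edeg_iff.mpr ⟨?_, ((Sandwiched.of_mem_Edeg habs hx).mul_Adeg_one).mono hspan⟩
  rw [Adeg_add]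
  exact Submodule.mul_mem_mul (mem_Edeg_iff.mp hx).1 hg

theorem Edeg_le_Eideal (hk : 1 ≤ k) : Edeg K U k ≤ Eideal K U :=
  le_iSup₂_of_le k hk le_rfl

theorem mul_mem_Eideal_left
    (habs : ∀ m, Adeg K (2 ^ m) * U m + U m * Adeg K (2 ^ m) ≤ U (m + 1))
    (hg : g ∈ Adeg K 1) (hx : x ∈ Eideal K U) : g * x ∈ Eideal K U := by
  suffices Eideal K U ≤ (Eideal K U).comap (LinearMap.mulLeft K g) from this hx
  refine iSup₂_le fun k _ y hy => ?_
  exact Edeg_le_Eideal (Nat.le_add_left 1 k) (mul_mem_Edeg_succ_left habs hg hy)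

theorem mul_mem_Eideal_right
    (habs : ∀ m, Adeg K (2 ^ m) * U m + U m * Adeg K (2 ^ m) ≤ U (m + 1))
    (hg : g ∈ Adeg K 1) (hx : x ∈ Eideal K U) : x * g ∈ Eideal K U := by
  suffices Eideal K U ≤ (Eideal K U).comap (LinearMap.mulRight K g) from this hx
  refine iSup₂_le fun k _ y hy => ?_
  exact Edeg_le_Eideal (Nat.le_add_left 1 k) (mul_mem_Edeg_succ_right habs hg hy)

end Ideal

theorem stmt3_general {K : Type*} [Field K]
    (U : ℕ → Submodule K (FreeAlgebra K (Fin 2)))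
    (habs : ∀ m, Adeg K (2 ^ m) * U m + U m * Adeg K (2 ^ m) ≤ U (m + 1)) :
    ∀ a x : FreeAlgebra K (Fin 2),
      x ∈ Eideal K U → a * x ∈ Eideal K U ∧ x * a ∈ Eideal K U :=
  fun a _ hx =>
    ⟨FreeAlgebra.mul_mem_of_forall_ι_mul_mem
        (fun i _ hy => mul_mem_Eideal_left habs (ι_mem_Adeg_one K i) hy) a hx,
      FreeAlgebra.mul_mem_of_forall_mul_ι_mem
        (fun i _ hy => mul_mem_Eideal_right habs (ι_mem_Adeg_one K i) hy) a hx⟩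

/-- Under the four properties of the general construction, `E` is a two-sided
ideal of the free algebra `A`. -/
theorem stmt3 {K : Type*} [Field K]
    (U V : ℕ → Submodule K (FreeAlgebra K (Fin 2)))
    (hUA : ∀ m, U m ≤ Adeg K (2 ^ m)) (hVA : ∀ m, V m ≤ Adeg K (2 ^ m))
    (hV0 : V 0 = Adeg K 1) (hU0 : U 0 = ⊥)
    (hVmon : ∀ m, ∃ S : Set (FreeAlgebra K (Fin 2)),
      (∀ x ∈ S, IsMonomial K x) ∧ V m = Submodule.span K S)
    (hsum : ∀ m, V m ⊔ U m = Adeg K (2 ^ m)) (hint : ∀ m, V m ⊓ U m = ⊥)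
    (habs : ∀ m, Adeg K (2 ^ m) * U m + U m * Adeg K (2 ^ m) ≤ U (m + 1))
    (hVV : ∀ m, V (m + 1) ≤ V m * V m) :
    ∀ a x : FreeAlgebra K (Fin 2),
      x ∈ Eideal K U → a * x ∈ Eideal K U ∧ x * a ∈ Eideal K U :=
  stmt3_general U habs
end

section
/- With U^<, U^>, V^<, V^> defined from the binary expansion of k as in the general construction, for all k, ℓ ∈ ℕ we have A(k)·U^<(ℓ) ⊆ U^<(k+ℓ) and U^>(k)·A(ℓ) ⊆ U^>(k+ℓ). -/
/-- The exponents `p₁ < p₂ < … < p_t` of the binary expansion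
`k = 2^{p₁} + … + 2^{p_t}`, in increasing order. -/
def bitsOf (k : ℕ) : List ℕ := (List.range k).filter (fun p => k.testBit p)

/-- `V^<(k) = V(2^{p₁}) ⋯ V(2^{p_t})` (increasing order); here `V m` plays the role
of `V(2^m)`.  For `k = 0` this is the unit submodule (dimension one). -/
noncomputable def Vlt (K : Type*) [Field K] (V : ℕ → Submodule K (FreeAlgebra K (Fin 2)))
    (k : ℕ) : Submodule K (FreeAlgebra K (Fin 2)) :=
  ((bitsOf k).map V).prod

/-- `V^>(k) = V(2^{p_t}) ⋯ V(2^{p₁})` (decreasing order). -/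
noncomputable def Vgt (K : Type*) [Field K] (V : ℕ → Submodule K (FreeAlgebra K (Fin 2)))
    (k : ℕ) : Submodule K (FreeAlgebra K (Fin 2)) :=
  (((bitsOf k).reverse).map V).prod

/-- `U^<(k) = Σ_i A(2^{p₁}+…+2^{p_{i-1}}) U(2^{p_i}) A(2^{p_{i+1}}+…+2^{p_t})`. -/
noncomputable def Ult (K : Type*) [Field K] (U : ℕ → Submodule K (FreeAlgebra K (Fin 2)))
    (k : ℕ) : Submodule K (FreeAlgebra K (Fin 2)) :=
  ⨆ i : Fin (bitsOf k).length,
    Adeg K (((bitsOf k).take i.val).map (fun p => 2 ^ p)).sum * U ((bitsOf k).get i) *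
      Adeg K (((bitsOf k).drop (i.val + 1)).map (fun p => 2 ^ p)).sum

/-- `U^>(k) = Σ_i A(2^{p_t}+…+2^{p_{i+1}}) U(2^{p_i}) A(2^{p_{i-1}}+…+2^{p₁})`,
i.e. the analogue of `U^<` for the reversed (decreasing) order of the powers. -/
noncomputable def Ugt (K : Type*) [Field K] (U : ℕ → Submodule K (FreeAlgebra K (Fin 2)))
    (k : ℕ) : Submodule K (FreeAlgebra K (Fin 2)) :=
  ⨆ i : Fin (bitsOf k).reverse.length,
    Adeg K ((((bitsOf k).reverse.take i.val).map (fun p => 2 ^ p)).sum) *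
      U ((bitsOf k).reverse.get i) *
      Adeg K ((((bitsOf k).reverse.drop (i.val + 1)).map (fun p => 2 ^ p)).sum)

/-!
If the binary expansion of `n` is `0, 1, …, r - 1, L`, then that of `n + 1` is `r, L`. Multiplying
the summand of `U^<(n)` at a position `i < r` by `A(1)` on the left, property 3 absorbs the blocks
`A(2^i)`, then `A(2^{i+1})`, …, `A(2^{r-1})` on the right into `U(2^r)`, so the product lands in
the first summand `U(2^r) A(L)` of `U^<(n + 1)`; the summands at the positions of `L` are summands
of `U^<(n + 1)` already. This gives `A(1) U^<(n) ⊆ U^<(n + 1)`, and induction on `k` the claim;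
`U^>` is the mirror image. Only `A(n) = A(1)^n` matters, so the argument works for the powers
`M ^ n` of any submodule `M` of any algebra.
-/

open List

theorem iSup_fin_succ {α : Type*} [CompleteLattice α] {n : ℕ} (f : Fin (n + 1) → α) :
    ⨆ i, f i = f 0 ⊔ ⨆ i : Fin n, f i.succ :=
  le_antisymm (iSup_le (Fin.cases le_sup_left fun i => le_sup_of_le_right (le_iSup_of_le i le_rfl)))
    (sup_le (le_iSup f 0) (iSup_le fun i => le_iSup f i.succ))

namespace Nat

theorem exists_bitIndices_eq_range_append (n : ℕ) :
    ∃ r L, n.bitIndices = range r ++ L ∧ (n + 1).bitIndices = r :: L := by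
  induction n using Nat.binaryRec with
  | zero => exact ⟨0, [], rfl, by simp⟩
  | bit b n ih =>
    cases b
    · exact ⟨0, (bit false n).bitIndices, rfl, by simp [← bitIndices_two_mul]⟩
    · obtain ⟨r, L, h, h'⟩ := ih
      refine ⟨r + 1, L.map (· + 1), ?_, ?_⟩
      · simp [h, range_succ_eq_map]
      · rw [bit_true, show 2 * n + 1 + 1 = 2 * (n + 1) by ring, bitIndices_two_mul, h', map_cons]

end Nat

theorem bitsOf_eq_bitIndices (k : ℕ) : bitsOf k = k.bitIndices := by
  refine ((pairwise_lt_range.filter _).sortedLT).eq_of_mem_iff Nat.bitIndices_sorted fun p => ?_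
  simp only [mem_filter, mem_range, Nat.mem_bitIndices, and_iff_right_iff_imp]
  exact fun h => (Nat.lt_two_pow_self).trans_le (Nat.ge_two_pow_of_testBit h)

def twoPowSum (l : List ℕ) : ℕ := (l.map (fun p => 2 ^ p)).sum

@[simp] theorem twoPowSum_nil : twoPowSum [] = 0 := rfl

@[simp] theorem twoPowSum_cons (p : ℕ) (l : List ℕ) :
    twoPowSum (p :: l) = 2 ^ p + twoPowSum l := by
  simp [twoPowSum]

@[simp] theorem twoPowSum_append (l₁ l₂ : List ℕ) :
    twoPowSum (l₁ ++ l₂) = twoPowSum l₁ + twoPowSum l₂ := by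
  simp [twoPowSum]

@[simp] theorem twoPowSum_reverse (l : List ℕ) : twoPowSum l.reverse = twoPowSum l := by
  simp [twoPowSum, map_reverse]

theorem twoPowSum_range_add_one (r : ℕ) : twoPowSum (range r) + 1 = 2 ^ r := by
  induction r with
  | zero => rfl
  | succ r ih => rw [range_succ, twoPowSum_append, twoPowSum_cons, twoPowSum_nil, pow_succ]; omega

section uOfList

variable {R A : Type*} [CommSemiring R] [Semiring A] [Algebra R A]

/-- The sum defining `U^<` and `U^>`, for an arbitrary list of exponents and with `M ^ n` in
place of `A(n)`. -/
def uOfList (M : Submodule R A) (U : ℕ → Submodule R A) (l : List ℕ) : Submodule R A :=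
  ⨆ i : Fin l.length, M ^ twoPowSum (l.take i) * U (l.get i) * M ^ twoPowSum (l.drop (i + 1))

variable {M : Submodule R A} {U : ℕ → Submodule R A}

@[simp] theorem uOfList_nil : uOfList M U [] = ⊥ := iSup_of_empty (ι := Fin 0) _

theorem uOfList_cons (p : ℕ) (l : List ℕ) :
    uOfList M U (p :: l) = U p * M ^ twoPowSum l ⊔ M ^ 2 ^ p * uOfList M U l := by
  refine (iSup_fin_succ (n := l.length) _).trans ?_
  rw [uOfList, Submodule.mul_iSup]
  congr 1
  · simp
  · refine iSup_congr fun i => ?_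
    simp [pow_add, mul_assoc]

theorem uOfList_append (l₁ l₂ : List ℕ) :
    uOfList M U (l₁ ++ l₂) =
      uOfList M U l₁ * M ^ twoPowSum l₂ ⊔ M ^ twoPowSum l₁ * uOfList M U l₂ := by
  induction l₁ with
  | nil => simp
  | cons p l₁ ih =>
    simp only [cons_append, uOfList_cons, ih, twoPowSum_append, twoPowSum_cons,
      Submodule.mul_sup, Submodule.sup_mul, pow_add, mul_assoc, sup_assoc]

@[simp] theorem uOfList_singleton (p : ℕ) : uOfList M U [p] = U p := by
  simp [uOfList_cons]

variable (habs : ∀ m, M ^ 2 ^ m * U m + U m * M ^ 2 ^ m ≤ U (m + 1))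
include habs

theorem mul_uOfList_range_le (r : ℕ) : M * uOfList M U (range r) ≤ U r := by
  induction r with
  | zero => simp
  | succ r ih =>
    rw [range_succ, uOfList_append, Submodule.mul_sup, ← mul_assoc, ← mul_assoc, ← pow_succ',
      twoPowSum_range_add_one, uOfList_singleton, twoPowSum_cons, twoPowSum_nil, add_zero]
    exact sup_le ((mul_le_mul_left ih _).trans (le_sup_right.trans (habs r)))
      (le_sup_left.trans (habs r))

theorem uOfList_reverse_range_mul_le (r : ℕ) : uOfList M U (range r).reverse * M ≤ U r := by
  induction r with
  | zero => simp
  | succ r ih =>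
    rw [range_succ, reverse_append, reverse_singleton, singleton_append, uOfList_cons,
      Submodule.sup_mul, mul_assoc, mul_assoc, ← pow_succ, twoPowSum_reverse,
      twoPowSum_range_add_one]
    exact sup_le (le_sup_right.trans (habs r))
      ((mul_le_mul_right ih _).trans (le_sup_left.trans (habs r)))

theorem mul_uOfList_bitIndices_le (n : ℕ) :
    M * uOfList M U n.bitIndices ≤ uOfList M U (n + 1).bitIndices := by
  obtain ⟨r, L, h, h'⟩ := n.exists_bitIndices_eq_range_append
  rw [h, h', uOfList_append, uOfList_cons, Submodule.mul_sup, ← mul_assoc, ← mul_assoc,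
    ← pow_succ', twoPowSum_range_add_one]
  exact sup_le_sup_right (mul_le_mul_left (mul_uOfList_range_le habs r) _) _

theorem uOfList_reverse_bitIndices_mul_le (n : ℕ) :
    uOfList M U n.bitIndices.reverse * M ≤ uOfList M U (n + 1).bitIndices.reverse := by
  obtain ⟨r, L, h, h'⟩ := n.exists_bitIndices_eq_range_append
  rw [h, h', reverse_append, reverse_cons, uOfList_append, uOfList_append, Submodule.sup_mul,
    mul_assoc, mul_assoc, ← pow_succ, twoPowSum_reverse, twoPowSum_range_add_one,
    uOfList_singleton, twoPowSum_cons, twoPowSum_nil, add_zero]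
  exact sup_le_sup_left (mul_le_mul_right (uOfList_reverse_range_mul_le habs r) _) _

theorem pow_mul_uOfList_bitIndices_le (k n : ℕ) :
    M ^ k * uOfList M U n.bitIndices ≤ uOfList M U (k + n).bitIndices := by
  induction k with
  | zero => simp
  | succ k ih =>
    rw [pow_succ', mul_assoc, add_right_comm]
    exact (mul_le_mul_right ih _).trans (mul_uOfList_bitIndices_le habs _)

theorem uOfList_reverse_bitIndices_mul_pow_le (n k : ℕ) :
    uOfList M U n.bitIndices.reverse * M ^ k ≤ uOfList M U (n + k).bitIndices.reverse := by
  induction k with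
  | zero => simp
  | succ k ih =>
    rw [pow_succ, ← mul_assoc, ← add_assoc]
    exact (mul_le_mul_left ih _).trans (uOfList_reverse_bitIndices_mul_le habs _)

end uOfList

theorem Ult_eq_uOfList {K : Type*} [Field K] (U : ℕ → Submodule K (FreeAlgebra K (Fin 2)))
    (k : ℕ) :
    Ult K U k = uOfList (Submodule.span K (Set.range (FreeAlgebra.ι K))) U k.bitIndices := by
  rw [← bitsOf_eq_bitIndices]
  rfl

theorem Ugt_eq_uOfList {K : Type*} [Field K] (U : ℕ → Submodule K (FreeAlgebra K (Fin 2)))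
    (k : ℕ) :
    Ugt K U k =
      uOfList (Submodule.span K (Set.range (FreeAlgebra.ι K))) U k.bitIndices.reverse := by
  rw [← bitsOf_eq_bitIndices]
  rfl

theorem stmt6_general {K : Type*} [Field K]
    (U : ℕ → Submodule K (FreeAlgebra K (Fin 2)))
    (habs : ∀ m, Adeg K (2 ^ m) * U m + U m * Adeg K (2 ^ m) ≤ U (m + 1)) :
    ∀ k ℓ : ℕ,
      Adeg K k * Ult K U ℓ ≤ Ult K U (k + ℓ) ∧
      Ugt K U k * Adeg K ℓ ≤ Ugt K U (k + ℓ) := by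
  intro k ℓ
  rw [Ult_eq_uOfList, Ult_eq_uOfList, Ugt_eq_uOfList, Ugt_eq_uOfList]
  exact ⟨pow_mul_uOfList_bitIndices_le habs k ℓ,
    uOfList_reverse_bitIndices_mul_pow_le habs k ℓ⟩

/-- Lemma 1.2 (second part): for all `k, ℓ`, `A(k)·U^<(ℓ) ⊆ U^<(k+ℓ)` and
`U^>(k)·A(ℓ) ⊆ U^>(k+ℓ)`. -/
theorem stmt6 {K : Type*} [Field K]
    (U V : ℕ → Submodule K (FreeAlgebra K (Fin 2)))
    (hUA : ∀ m, U m ≤ Adeg K (2 ^ m)) (hVA : ∀ m, V m ≤ Adeg K (2 ^ m))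
    (hV0 : V 0 = Adeg K 1) (hU0 : U 0 = ⊥)
    (hVmon : ∀ m, ∃ S : Set (FreeAlgebra K (Fin 2)),
      (∀ x ∈ S, IsMonomial K x) ∧ V m = Submodule.span K S)
    (hsum : ∀ m, V m ⊔ U m = Adeg K (2 ^ m)) (hint : ∀ m, V m ⊓ U m = ⊥)
    (habs : ∀ m, Adeg K (2 ^ m) * U m + U m * Adeg K (2 ^ m) ≤ U (m + 1))
    (hVV : ∀ m, V (m + 1) ≤ V m * V m) :
    ∀ k ℓ : ℕ,
      Adeg K k * Ult K U ℓ ≤ Ult K U (k + ℓ) ∧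
      Ugt K U k * Adeg K ℓ ≤ Ugt K U (k + ℓ) :=
  stmt6_general U habs
end

section
/- Let Y ⊆ ℕ and let (r_n)_{n∈Y} be natural numbers such that for all m, n ∈ Y ∪ {0} with m < n: 2^{3n+4}·r_m^{33} < r_n < 2^{2^{n−m−3}} (with r_0 interpreted appropriately so the left inequality gives r_n > 2^{3n+4}). Then for all n ∈ Y, 2^{3n+4}·∏_{i∈Y, i<n} r_i^{32} < r_n. -/
/-!
Along an increasing chain with `c b * r a ^ (k + 1) < r b`, the product of the `r a ^ k` below
`b` telescopes: if `m` is the largest index below `b`, the inductive bound at `m` gives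
`∏_{a < m} r a ^ k < r m`, so `∏_{a < b} r a ^ k < r m ^ (k + 1)`, and then the step from `m`
to `b` finishes.
-/

theorem mul_prod_pow_lt_of_mul_pow_succ_lt {α : Type*} [LinearOrder α] {S : Set α}
    {r c : α → ℕ} {k : ℕ} (hc : ∀ b ∈ S, 0 < c b) (hbase : ∀ b ∈ S, c b < r b)
    (hstep : ∀ a ∈ S, ∀ b ∈ S, a < b → c b * r a ^ (k + 1) < r b)
    (t : Finset α) (htS : ↑t ⊆ S) {b : α} (hb : b ∈ S) (htb : ∀ a ∈ t, a < b) :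
    c b * ∏ a ∈ t, r a ^ k < r b := by
  induction t using Finset.induction_on_max generalizing b with
  | empty => simpa using hbase b hb
  | insert m t htm ih =>
    have hmS : m ∈ S := htS (Finset.mem_insert_self m t)
    have htS' : ↑t ⊆ S := fun a ha => htS (Finset.mem_insert_of_mem ha)
    have hprod_lt : ∏ a ∈ t, r a ^ k < r m :=
      lt_of_le_of_lt (Nat.le_mul_of_pos_left _ (hc m hmS)) (ih htS' hmS htm)
    have hrm : 0 < r m := (Nat.zero_le _).trans_lt hprod_lt
    have hmb : m < b := htb m (Finset.mem_insert_self m t)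
    rw [Finset.prod_insert (fun hm => (htm m hm).false)]
    calc c b * (r m ^ k * ∏ a ∈ t, r a ^ k)
        < c b * (r m ^ k * r m) := by gcongr; exact hc b hb
      _ = c b * r m ^ (k + 1) := by ring
      _ < r b := hstep m hmS b hb hmb

/-- Lemma 3.3 (arithmetic): if `Y ⊆ ℕ` consists of numbers `≥ 8`, `r 0 = 1`, and
for all `m < n` in `Y ∪ {0}` one has `2^{3n+4} r_m^{33} < r_n < 2^{2^{n-m-3}}`, then
for all `n ∈ Y`, `2^{3n+4} ∏_{i ∈ Y, i < n} r_i^{32} < r_n`. -/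
theorem stmt8 (Y : Set ℕ) [DecidablePred (· ∈ Y)] (r : ℕ → ℕ)
    (hr0 : r 0 = 1) (hY8 : ∀ i ∈ Y, 8 ≤ i)
    (h : ∀ m n : ℕ, m ∈ Y ∪ {0} → n ∈ Y ∪ {0} → m < n →
      2 ^ (3 * n + 4) * r m ^ 33 < r n ∧ r n < 2 ^ 2 ^ (n - m - 3)) :
    ∀ n ∈ Y,
      2 ^ (3 * n + 4) * ∏ i ∈ (Finset.range n).filter (· ∈ Y), r i ^ 32 < r n := by
  intro n hn
  have hbase : ∀ b ∈ Y, 2 ^ (3 * b + 4) < r b := fun b hb => by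
    simpa [hr0] using (h 0 b (Or.inr rfl) (Or.inl hb) (by linarith [hY8 b hb])).1
  refine mul_prod_pow_lt_of_mul_pow_succ_lt (fun b _ => by positivity) hbase
    (fun a ha b hb hab => (h a b (Or.inl ha) (Or.inl hb) hab).1) _
    (fun i hi => (Finset.mem_filter.mp hi).2) hn
    (fun i hi => Finset.mem_range.mp (Finset.mem_filter.mp hi).1)
end

section
/- Let K be a field and F the free associative K-algebra on x_1, x_2 (each appearing in relations only in degree ≥ 2 terms), and let I be the two-sided ideal generated by two elements f_1, f_2 ∈ F each of which is a sum of words of degree two or higher. If F/I is finite dimensional over K, then F/I is not commutative. -/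
/-- The subspace of the free algebra on `n` generators spanned by words of degree
two or higher. -/
noncomputable def degGe2 (K : Type*) [Field K] (n : ℕ) : Submodule K (FreeAlgebra K (Fin n)) :=
  ⨆ k : ℕ, (Submodule.span K (Set.range (FreeAlgebra.ι K))) ^ (k + 2)

/-- The two-sided ideal of the free algebra generated by a set `S`. -/
noncomputable def idealGen (K : Type*) [Field K] (n : ℕ) (S : Set (FreeAlgebra K (Fin n))) :
    Submodule K (FreeAlgebra K (Fin n)) :=
  Submodule.span K {x : FreeAlgebra K (Fin n) |
    ∃ a s b : FreeAlgebra K (Fin n), s ∈ S ∧ x = a * s * b}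

/-!
Suppose every commutator lies in `I = (f₁, f₂)` and let `𝔪` be the augmentation ideal. Since
every element is a scalar plus an element of `𝔪`, `I ⊆ K f₁ + K f₂ + 𝔪I + I𝔪`, so
`[x₀, x₁] = α f₁ + β f₂ + w` with `w ∈ 𝔪I + I𝔪 ⊆ 𝔪³`. As `[x₀, x₁] ∉ 𝔪³`, say `α ≠ 0`. In the
abelianization `K[x₀, x₁]` the commutator vanishes, so with `p, h` the images of `f₁, f₂` and
`J = (p, h)` we get `J ⊆ (h) + 𝔪J`, hence `J ⊆ (h) + 𝔪ⁿ` for all `n`, and `K[x₀, x₁]/J` is still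
finite dimensional. Then for each variable `x_s`, `J` contains an element whose lowest form is a
nonzero multiple of a power of `x_s`; modulo a higher power of `𝔪` it is a multiple of `h`, so the
lowest form of `h` divides powers of both variables. It is therefore a constant, contradicting
`h ∈ 𝔪`.
-/

section Augmented

variable {R A : Type*} [CommRing R] [Ring A] [Algebra R A]

theorem Submodule.le_top_mul_mul_top (P : Submodule R A) (M N : Submodule R A) :
    M * P * N ≤ ⊤ * P * ⊤ := by
  gcongr <;> exact le_top

theorem Submodule.top_mul_mul_top_le_sup (P m : Submodule R A) (hm : ⊤ = 1 ⊔ m) :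
    ⊤ * P * ⊤ ≤ P ⊔ (m * (⊤ * P * ⊤) ⊔ ⊤ * P * ⊤ * m) := by
  have hP : P ≤ ⊤ * P * ⊤ := by simpa using P.le_top_mul_mul_top 1 1
  have hPm : P * m ≤ ⊤ * P * ⊤ := by simpa using P.le_top_mul_mul_top 1 m
  conv_lhs => rw [hm]
  simp only [sup_mul, mul_sup, one_mul, mul_one]
  refine sup_le (sup_le le_sup_left ?_) (sup_le ?_ ?_)
  · exact le_sup_of_le_right (le_sup_of_le_left (by gcongr))
  · exact le_sup_of_le_right (le_sup_of_le_right (by gcongr))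
  · exact le_sup_of_le_right (le_sup_of_le_left (by rw [mul_assoc]; gcongr))

variable (ε : A →ₐ[R] R)

theorem AlgHom.top_eq_one_sup_ker : (⊤ : Submodule R A) = 1 ⊔ LinearMap.ker ε.toLinearMap := by
  refine (eq_top_iff.2 fun a _ => Submodule.mem_sup.2 ⟨algebraMap R A (ε a),
    Submodule.mem_one.2 ⟨_, rfl⟩, a - algebraMap R A (ε a), ?_, by abel⟩).symm
  simp [LinearMap.mem_ker]

theorem AlgHom.top_mul_ker_le : ⊤ * LinearMap.ker ε.toLinearMap ≤ LinearMap.ker ε.toLinearMap :=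
  Submodule.mul_le.2 fun a _ x hx => by simp_all [LinearMap.mem_ker]

theorem AlgHom.ker_mul_top_le : LinearMap.ker ε.toLinearMap * ⊤ ≤ LinearMap.ker ε.toLinearMap :=
  Submodule.mul_le.2 fun x hx a _ => by simp_all [LinearMap.mem_ker]

theorem AlgHom.ker_pow_two_le_ker :
    LinearMap.ker ε.toLinearMap ^ 2 ≤ LinearMap.ker ε.toLinearMap := by
  rw [pow_two]
  exact (mul_le_mul' le_rfl le_top).trans ε.ker_mul_top_le

theorem AlgHom.top_mul_mul_top_le_ker_pow_two {P : Submodule R A}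
    (hP : P ≤ LinearMap.ker ε.toLinearMap ^ 2) : ⊤ * P * ⊤ ≤ LinearMap.ker ε.toLinearMap ^ 2 :=
  calc ⊤ * P * ⊤ ≤ ⊤ * (LinearMap.ker ε.toLinearMap * LinearMap.ker ε.toLinearMap) * ⊤ := by
        rw [← pow_two]; gcongr
    _ = (⊤ * LinearMap.ker ε.toLinearMap) * (LinearMap.ker ε.toLinearMap * ⊤) := by
        simp only [mul_assoc]
    _ ≤ LinearMap.ker ε.toLinearMap ^ 2 := by
        rw [pow_two]; exact mul_le_mul' ε.top_mul_ker_le ε.ker_mul_top_le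

end Augmented

theorem Ideal.le_sup_pow_of_le_sup_mul {R : Type*} [CommSemiring R] {J H M : Ideal R}
    (h : J ≤ H ⊔ M * J) (n : ℕ) : J ≤ H ⊔ M ^ n := by
  have : J ≤ H ⊔ M ^ n * J := by
    induction n with
    | zero => simp
    | succ n ih => calc
        J ≤ H ⊔ M ^ n * (H ⊔ M * J) := ih.trans (by gcongr)
        _ = (H ⊔ M ^ n * H) ⊔ M ^ (n + 1) * J := by rw [mul_sup, pow_succ, mul_assoc, sup_assoc]
        _ ≤ H ⊔ M ^ (n + 1) * J := sup_le_sup_right (sup_le le_rfl Ideal.mul_le_right) _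
  exact this.trans (sup_le_sup_left Ideal.mul_le_left _)

theorem Ideal.span_pair_le_span_singleton_sup_mul {K R : Type*} [Field K] [CommRing R]
    [Algebra K R] {M : Ideal R} {p q : R} {α β : K} (hα : α ≠ 0)
    (h : α • p + β • q ∈ M * Ideal.span {p, q}) :
    Ideal.span {p, q} ≤ Ideal.span {q} ⊔ M * Ideal.span {p, q} := by
  refine Ideal.span_le.2 (Set.insert_subset_iff.2 ⟨?_, Set.singleton_subset_iff.2
    (Ideal.mem_sup_left (Ideal.mem_span_singleton_self q))⟩)
  have hp : α⁻¹ • (α • p + β • q) - (α⁻¹ * β) • q = p := by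
    rw [smul_add, smul_smul, inv_mul_cancel₀ hα, one_smul, mul_smul, add_sub_cancel_right]
  have hmem := sub_mem (Ideal.mem_sup_right (Submodule.smul_of_tower_mem _ α⁻¹ h))
    (Ideal.mem_sup_left (Submodule.smul_of_tower_mem _ (α⁻¹ * β) (Ideal.mem_span_singleton_self q)))
  rwa [hp] at hmem

namespace MvPolynomial

variable {σ R : Type*} [CommRing R]

theorem homogeneousComponent_eq_zero_of_mem_pow {p : MvPolynomial σ R} {m n : ℕ}
    (hp : p ∈ idealOfVars σ R ^ m) (hn : n < m) : homogeneousComponent n p = 0 := by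
  ext x
  rw [coeff_homogeneousComponent, coeff_zero]
  split_ifs with hx
  · exact (mem_pow_idealOfVars_iff' m p).1 hp x (hx ▸ hn)
  · rfl

theorem coe_homogeneousComponent (n : ℕ) (p : MvPolynomial σ R) :
    (homogeneousComponent n p : MvPowerSeries σ R) =
      MvPowerSeries.homogeneousComponent n (p : MvPowerSeries σ R) := by
  ext x
  simp [coeff_homogeneousComponent, MvPowerSeries.coeff_homogeneousComponent]

theorem le_order_coe_of_mem_pow {p : MvPolynomial σ R} {n : ℕ} (hp : p ∈ idealOfVars σ R ^ n) :
    (n : ℕ∞) ≤ (p : MvPowerSeries σ R).order :=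
  MvPowerSeries.nat_le_order fun x hx => by
    rw [coeff_coe]; exact (mem_pow_idealOfVars_iff' n p).1 hp x hx

theorem homogeneousComponent_mul_of_mem_pow {f g : MvPolynomial σ R} {m n : ℕ}
    (hf : f ∈ idealOfVars σ R ^ m) (hg : g ∈ idealOfVars σ R ^ n) :
    homogeneousComponent (m + n) (f * g) = homogeneousComponent m f * homogeneousComponent n g := by
  apply coe_injective
  simp only [coe_mul, coe_homogeneousComponent]
  exact MvPowerSeries.homogeneousComponent_mul_of_le_order (le_order_coe_of_mem_pow hf)
    (le_order_coe_of_mem_pow hg)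

theorem exists_mem_pow_homogeneousComponent_ne_zero {p : MvPolynomial σ R} (hp : p ≠ 0) :
    ∃ n, p ∈ idealOfVars σ R ^ n ∧ homogeneousComponent n p ≠ 0 := by
  classical
  have hc : ∀ x, p.coeff x ≠ 0 → homogeneousComponent x.degree p ≠ 0 := fun x hx h =>
    hx (by simpa [coeff_homogeneousComponent] using congrArg (coeff x) h)
  have hex : ∃ n, homogeneousComponent n p ≠ 0 := by
    obtain ⟨x, hx⟩ := ne_zero_iff.1 hp
    exact ⟨_, hc x hx⟩
  refine ⟨Nat.find hex, (mem_pow_idealOfVars_iff' _ p).2 fun x hx => ?_, Nat.find_spec hex⟩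
  by_contra h
  exact Nat.find_min hex hx (hc x h)

theorem homogeneousComponent_dvd_of_dvd [IsDomain R] {h b : MvPolynomial σ R} {e d : ℕ}
    (hhb : h ∣ b) (he : h ∈ idealOfVars σ R ^ e) (he0 : homogeneousComponent e h ≠ 0)
    (hd : b ∈ idealOfVars σ R ^ d) (hd0 : homogeneousComponent d b ≠ 0) :
    homogeneousComponent e h ∣ homogeneousComponent d b := by
  obtain ⟨a, rfl⟩ := hhb
  obtain ⟨r, hr, hr0⟩ := exists_mem_pow_homogeneousComponent_ne_zero (right_ne_zero_of_mul
    (fun h0 => hd0 (by rw [h0, map_zero])))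
  have hmul := homogeneousComponent_mul_of_mem_pow he hr
  obtain rfl : e + r = d := by
    rcases lt_trichotomy (e + r) d with hlt | heq | hgt
    · exact absurd (hmul ▸ homogeneousComponent_eq_zero_of_mem_pow hd hlt) (mul_ne_zero he0 hr0)
    · exact heq
    · have := pow_add (idealOfVars σ R) e r ▸ Ideal.mul_mem_mul he hr
      exact absurd (homogeneousComponent_eq_zero_of_mem_pow this hgt) hd0
  exact Dvd.intro _ hmul.symm

theorem isUnit_of_dvd_X_pow_of_dvd_X_pow [IsDomain R] {i j : σ} (hij : i ≠ j)
    {φ : MvPolynomial σ R} {m n : ℕ} (hi : φ ∣ X i ^ m) (hj : φ ∣ X j ^ n) : IsUnit φ := by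
  obtain ⟨_ | l, -, hl⟩ := (dvd_prime_pow X_prime m).1 hi
  · exact associated_one_iff_isUnit.1 (by simpa using hl)
  · have hXi : X i ∣ X j ^ n := (dvd_pow_self _ l.succ_ne_zero).trans (hl.symm.dvd.trans hj)
    exact absurd (X_dvd_X.1 (X_prime.dvd_of_dvd_pow hXi)) hij

theorem aeval_X_mem_pow_natTrailingDegree (q : Polynomial R) (s : σ) :
    Polynomial.aeval (X s) q ∈ idealOfVars σ R ^ q.natTrailingDegree := by
  rw [Polynomial.aeval_eq_sum_range]
  refine Ideal.sum_mem _ fun i _ => ?_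
  rcases lt_or_ge i q.natTrailingDegree with hi | hi
  · simp [Polynomial.coeff_eq_zero_of_lt_natTrailingDegree hi]
  · rw [smul_eq_C_mul]
    exact Ideal.mul_mem_left _ _ (Ideal.pow_le_pow_right hi
      (Ideal.pow_mem_pow (Ideal.subset_span (Set.mem_range_self s)) i))

theorem homogeneousComponent_aeval_X (q : Polynomial R) (s : σ) :
    homogeneousComponent q.natTrailingDegree (Polynomial.aeval (X s) q) =
      C q.trailingCoeff * X s ^ q.natTrailingDegree := by
  classical
  rw [Polynomial.aeval_eq_sum_range, map_sum]
  simp_rw [map_smul, homogeneousComponent_of_mem (isHomogeneous_X_pow s _), smul_ite, smul_zero]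
  rw [Finset.sum_ite_eq, if_pos (Finset.mem_range_succ_iff.2 q.natTrailingDegree_le_natDegree),
    smul_eq_C_mul, Polynomial.trailingCoeff]


variable {K : Type*} [Field K]

theorem exists_mem_homogeneousComponent_eq_C_mul_X_pow {J : Ideal (MvPolynomial σ K)}
    [Module.Finite K (MvPolynomial σ K ⧸ J)] (s : σ) :
    ∃ v ∈ J, ∃ d, ∃ κ ≠ 0, v ∈ idealOfVars σ K ^ d ∧ homogeneousComponent d v = C κ * X s ^ d := by
  obtain ⟨q, hq, hqv⟩ := IsIntegral.of_finite K (Ideal.Quotient.mk J (X s))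
  refine ⟨Polynomial.aeval (X s) q, ?_, _, q.trailingCoeff, by simpa using hq.ne_zero,
    aeval_X_mem_pow_natTrailingDegree q s, homogeneousComponent_aeval_X q s⟩
  rw [← Ideal.Quotient.eq_zero_iff_mem, ← Ideal.Quotient.mkₐ_eq_mk K,
    ← Polynomial.aeval_algHom_apply]
  exact hqv

theorem not_finite_quotient_of_le_span_sup_pow {i j : σ} (hij : i ≠ j) {h : MvPolynomial σ K}
    (hh : h ∈ idealOfVars σ K) {J : Ideal (MvPolynomial σ K)}
    (hJ : ∀ n, J ≤ Ideal.span {h} ⊔ idealOfVars σ K ^ n) :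
    ¬ Module.Finite K (MvPolynomial σ K ⧸ J) := by
  intro hfin
  have hlow : ∀ s, ∃ b d, h ∣ b ∧ b ∈ idealOfVars σ K ^ d ∧ homogeneousComponent d b ≠ 0 ∧
      homogeneousComponent d b ∣ X s ^ d := by
    intro s
    obtain ⟨v, hvJ, d, κ, hκ, hv, hvd⟩ := exists_mem_homogeneousComponent_eq_C_mul_X_pow (J := J) s
    obtain ⟨b, hb, w, hw, rfl⟩ := Submodule.mem_sup.1 (hJ (d + 1) hvJ)
    have hwd : homogeneousComponent d w = 0 :=
      homogeneousComponent_eq_zero_of_mem_pow hw d.lt_succ_self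
    rw [map_add, hwd, add_zero] at hvd
    refine ⟨b, d, Ideal.mem_span_singleton.1 hb, ?_, ?_, ?_⟩
    · simpa using Ideal.sub_mem _ hv (Ideal.pow_le_pow_right d.le_succ hw)
    · rw [hvd]; exact mul_ne_zero (C_ne_zero.2 hκ) (pow_ne_zero _ (X_ne_zero s))
    · rw [hvd]; exact ((hκ.isUnit.map C).mul_left_dvd).2 dvd_rfl
  have h0 : h ≠ 0 := by
    rintro rfl
    obtain ⟨b, d, hb, -, hb0, -⟩ := hlow i
    rw [zero_dvd_iff.1 hb, map_zero] at hb0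
    exact hb0 rfl
  obtain ⟨e, he, he0⟩ := exists_mem_pow_homogeneousComponent_ne_zero h0
  have hdvd : ∀ s, ∃ d, homogeneousComponent e h ∣ X s ^ d := fun s => by
    obtain ⟨b, d, hb, hbd, hb0, hbX⟩ := hlow s
    exact ⟨d, (homogeneousComponent_dvd_of_dvd hb he he0 hbd hb0).trans hbX⟩
  obtain ⟨m, hm⟩ := hdvd i
  obtain ⟨n, hn⟩ := hdvd j
  have he1 : e ≠ 0 := by
    rintro rfl
    exact he0 (homogeneousComponent_eq_zero_of_mem_pow (m := 1) (by rwa [pow_one]) one_pos)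
  have hunit := (isUnit_of_dvd_X_pow_of_dvd_X_pow hij hm hn).map constantCoeff
  rw [constantCoeff_eq, coeff_homogeneousComponent, if_neg (by simpa using he1.symm)] at hunit
  exact not_isUnit_zero hunit

theorem not_finite_quotient_span_pair {i j : σ} (hij : i ≠ j) {p q : MvPolynomial σ K}
    (hp : p ∈ idealOfVars σ K) (hq : q ∈ idealOfVars σ K) {α β : K} (hαβ : α ≠ 0 ∨ β ≠ 0)
    (h : α • p + β • q ∈ idealOfVars σ K * Ideal.span {p, q}) :
    ¬ Module.Finite K (MvPolynomial σ K ⧸ Ideal.span {p, q}) := by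
  rcases hαβ with hα | hβ
  · exact not_finite_quotient_of_le_span_sup_pow hij hq
      (Ideal.le_sup_pow_of_le_sup_mul (Ideal.span_pair_le_span_singleton_sup_mul hα h))
  · rw [Set.pair_comm] at h ⊢
    exact not_finite_quotient_of_le_span_sup_pow hij hp
      (Ideal.le_sup_pow_of_le_sup_mul (Ideal.span_pair_le_span_singleton_sup_mul hβ
        (by rwa [add_comm] at h)))

end MvPolynomial

namespace FreeAlgebra

variable {R σ : Type*} [CommRing R]

variable (R σ) in
abbrev augIdeal : Submodule R (FreeAlgebra R σ) :=
  LinearMap.ker (algebraMapInv (R := R) (X := σ)).toLinearMap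

theorem ι_mem_augIdeal (x : σ) : ι R x ∈ augIdeal R σ :=
  LinearMap.mem_ker.2 (lift_ι_apply _ _)

theorem degGe2_le_augIdeal_pow_two {K : Type*} [Field K] (n : ℕ) :
    degGe2 K n ≤ augIdeal K (Fin n) ^ 2 := by
  set V := Submodule.span K (Set.range (ι K : Fin n → FreeAlgebra K (Fin n)))
  have hV : V ≤ augIdeal K (Fin n) := Submodule.span_le.2 (Set.range_subset_iff.2 ι_mem_augIdeal)
  have h2 : augIdeal K (Fin n) ^ 2 * ⊤ ≤ augIdeal K (Fin n) ^ 2 := by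
    rw [pow_two, mul_assoc]
    exact mul_le_mul' le_rfl algebraMapInv.ker_mul_top_le
  refine iSup_le fun k => ?_
  rw [add_comm, pow_add]
  exact le_trans (mul_le_mul' (pow_le_pow_left' hV 2) le_top) h2

section Scaling

open Polynomial

variable {B : Type*} [Ring B] [Algebra R B] (φ : FreeAlgebra R σ →ₐ[R] B[X])

theorem coeff_zero_eq_algebraMap_algebraMapInv (hφ : ∀ x, (φ (ι R x)).coeff 0 = 0)
    (a : FreeAlgebra R σ) : (φ a).coeff 0 = algebraMap R B (algebraMapInv a) := by
  induction a using FreeAlgebra.induction with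
  | grade0 r => simp [Polynomial.coeff_C]
  | grade1 x => simp [hφ, algebraMapInv]
  | mul a b ha hb => simp [Polynomial.mul_coeff_zero, ha, hb]
  | add a b ha hb => simp [ha, hb]

theorem X_pow_dvd_of_mem_augIdeal_pow (hφ : ∀ x, (φ (ι R x)).coeff 0 = 0) {k : ℕ}
    {a : FreeAlgebra R σ} (ha : a ∈ augIdeal R σ ^ k) : (X : B[X]) ^ k ∣ φ a := by
  induction k generalizing a with
  | zero => exact one_dvd _
  | succ k ih =>
    rw [pow_succ'] at ha
    refine Submodule.mul_induction_on ha (fun x hx y hy => ?_) fun _ _ ha hb => by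
      rw [map_add]; exact dvd_add ha hb
    obtain ⟨p, hp⟩ := X_dvd_iff.2 (by
      rw [coeff_zero_eq_algebraMap_algebraMapInv φ hφ x, show algebraMapInv x = 0 from hx,
        map_zero])
    obtain ⟨q, hq⟩ := ih hy
    exact ⟨p * q, by rw [map_mul, hp, hq, mul_assoc, ← mul_assoc p, ← X_pow_mul, pow_succ',
      mul_assoc, mul_assoc]⟩

end Scaling

open Polynomial Matrix in
theorem commutator_not_mem_augIdeal_pow_three {K : Type*} [Field K] {x y : σ} (hxy : x ≠ y) :
    ι K x * ι K y - ι K y * ι K x ∉ augIdeal K σ ^ 3 := by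
  classical
  intro hc
  -- `φ` maps `augIdeal ^ 3` into `X ^ 3 * M₂(K)[X]`, but the commutator to `X ^ 2` times a
  -- nonzero matrix.
  let E : σ → Matrix (Fin 2) (Fin 2) K := fun z => if z = x then single 0 1 1 else single 1 0 1
  let φ : FreeAlgebra K σ →ₐ[K] (Matrix (Fin 2) (Fin 2) K)[X] := lift K fun z => C (E z) * X
  have hmul : ∀ a b, (C a * X) * (C b * X) = C (a * b) * (X : (Matrix (Fin 2) (Fin 2) K)[X]) ^ 2 :=
    fun a b => by rw [mul_assoc, ← mul_assoc X, X_mul, mul_assoc, ← mul_assoc, ← C_mul, pow_two]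
  have h2 := X_pow_dvd_iff.1 (X_pow_dvd_of_mem_augIdeal_pow φ (fun z => by simp [φ]) hc) 2
    (by norm_num)
  have hφc : φ (ι K x * ι K y - ι K y * ι K x) = C (E x * E y - E y * E x) * X ^ 2 := by
    simp only [φ, map_sub, map_mul, lift_ι_apply, hmul, sub_mul]
  rw [hφc, coeff_C_mul_X_pow, if_pos rfl] at h2
  have := congrFun (congrFun h2 0) 0
  simp [E, hxy.symm] at this

section IdealGen

variable {K : Type*} [Field K] {n : ℕ}

theorem idealGen_eq_top_mul_span_mul_top (S : Set (FreeAlgebra K (Fin n))) :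
    idealGen K n S = ⊤ * Submodule.span K S * ⊤ := by
  rw [idealGen, ← Submodule.span_univ, Submodule.span_mul_span, Submodule.span_mul_span]
  congr 1
  ext x
  simp only [Set.mem_mul, Set.mem_univ, true_and]
  constructor
  · rintro ⟨a, s, b, hs, rfl⟩
    exact ⟨_, ⟨a, s, hs, rfl⟩, b, rfl⟩
  · rintro ⟨_, ⟨a, s, hs, rfl⟩, b, rfl⟩
    exact ⟨a, s, b, hs, rfl⟩

theorem idealGen_le_span_sup (S : Set (FreeAlgebra K (Fin n))) :
    idealGen K n S ≤ Submodule.span K S ⊔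
      (augIdeal K (Fin n) * idealGen K n S ⊔ idealGen K n S * augIdeal K (Fin n)) := by
  rw [idealGen_eq_top_mul_span_mul_top]
  exact Submodule.top_mul_mul_top_le_sup _ _ algebraMapInv.top_eq_one_sup_ker

theorem sup_le_augIdeal_pow_three {S : Set (FreeAlgebra K (Fin n))}
    (hS : Submodule.span K S ≤ augIdeal K (Fin n) ^ 2) :
    augIdeal K (Fin n) * idealGen K n S ⊔ idealGen K n S * augIdeal K (Fin n) ≤
      augIdeal K (Fin n) ^ 3 := by
  have hI : idealGen K n S ≤ augIdeal K (Fin n) ^ 2 := by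
    rw [idealGen_eq_top_mul_span_mul_top]
    exact algebraMapInv.top_mul_mul_top_le_ker_pow_two hS
  exact sup_le (by rw [pow_succ']; gcongr) (by rw [pow_succ]; gcongr)

end IdealGen

section Abelianization

variable {R σ : Type*} [CommRing R]

noncomputable def toMvPolynomial : FreeAlgebra R σ →ₐ[R] MvPolynomial σ R :=
  lift R MvPolynomial.X

theorem toMvPolynomial_surjective :
    Function.Surjective (toMvPolynomial : FreeAlgebra R σ →ₐ[R] MvPolynomial σ R) := by
  rw [← AlgHom.range_eq_top, eq_top_iff, ← MvPolynomial.adjoin_range_X, Algebra.adjoin_le_iff]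
  rintro _ ⟨i, rfl⟩
  exact ⟨ι R i, lift_ι_apply _ _⟩

theorem toMvPolynomial_commutator (x y : σ) :
    toMvPolynomial (ι R x * ι R y - ι R y * ι R x) = 0 := by
  simp [toMvPolynomial, mul_comm]

theorem toMvPolynomial_mem_idealOfVars {a : FreeAlgebra R σ} (ha : a ∈ augIdeal R σ) :
    toMvPolynomial a ∈ MvPolynomial.idealOfVars σ R := by
  have hconst : ∀ b : FreeAlgebra R σ,
      MvPolynomial.constantCoeff (toMvPolynomial b) = algebraMapInv b := fun b => by
    induction b using FreeAlgebra.induction <;> simp_all [toMvPolynomial, algebraMapInv]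
  rw [← pow_one (MvPolynomial.idealOfVars σ R), MvPolynomial.mem_pow_idealOfVars_iff']
  intro x hx
  rw [(Finsupp.degree_eq_zero_iff x).1 (Nat.lt_one_iff.1 hx), ← MvPolynomial.constantCoeff_eq,
    hconst]
  exact ha

end Abelianization

section AbelianizationIdealGen

variable {K : Type*} [Field K] {n : ℕ} {S : Set (FreeAlgebra K (Fin n))}

theorem toMvPolynomial_mem_span_image {a : FreeAlgebra K (Fin n)} (ha : a ∈ idealGen K n S) :
    toMvPolynomial a ∈ Ideal.span (toMvPolynomial '' S) := by
  refine Submodule.span_induction ?_ (by simp) (fun _ _ _ _ => by rw [map_add]; exact add_mem)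
    (fun c _ _ h => by rw [map_smul]; exact Submodule.smul_of_tower_mem _ c h) ha
  rintro _ ⟨a, s, b, hs, rfl⟩
  rw [map_mul, map_mul]
  exact Ideal.mul_mem_right _ _ (Ideal.mul_mem_left _ _ (Ideal.subset_span ⟨s, hs, rfl⟩))

theorem toMvPolynomial_mem_idealOfVars_mul {w : FreeAlgebra K (Fin n)}
    (hw : w ∈ augIdeal K (Fin n) * idealGen K n S ⊔ idealGen K n S * augIdeal K (Fin n)) :
    toMvPolynomial w ∈ MvPolynomial.idealOfVars (Fin n) K * Ideal.span (toMvPolynomial '' S) := by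
  suffices h : augIdeal K (Fin n) * idealGen K n S ⊔ idealGen K n S * augIdeal K (Fin n) ≤
      ((MvPolynomial.idealOfVars (Fin n) K * Ideal.span (toMvPolynomial '' S)).restrictScalars
        K).comap toMvPolynomial.toLinearMap from h hw
  refine sup_le (Submodule.mul_le.2 fun x hx y hy => ?_) (Submodule.mul_le.2 fun y hy x hx => ?_)
  all_goals
    rw [Submodule.mem_comap, AlgHom.toLinearMap_apply, map_mul, Submodule.restrictScalars_mem]
  · exact Ideal.mul_mem_mul (toMvPolynomial_mem_idealOfVars hx) (toMvPolynomial_mem_span_image hy)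
  · rw [mul_comm (toMvPolynomial y)]
    exact Ideal.mul_mem_mul (toMvPolynomial_mem_idealOfVars hx) (toMvPolynomial_mem_span_image hy)

theorem finite_quotient_span_image [Module.Finite K (FreeAlgebra K (Fin n) ⧸ idealGen K n S)] :
    Module.Finite K (MvPolynomial (Fin n) K ⧸ Ideal.span (toMvPolynomial '' S)) := by
  let L := (idealGen K n S).liftQ
    ((Ideal.Quotient.mkₐ K _).toLinearMap ∘ₗ
      (toMvPolynomial : FreeAlgebra K (Fin n) →ₐ[K] _).toLinearMap)
    fun a ha => by simpa [Ideal.Quotient.eq_zero_iff_mem] using toMvPolynomial_mem_span_image ha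
  refine Module.Finite.of_surjective L fun y => ?_
  obtain ⟨p, rfl⟩ := Ideal.Quotient.mk_surjective y
  obtain ⟨a, rfl⟩ := toMvPolynomial_surjective p
  exact ⟨Submodule.Quotient.mk a, rfl⟩

end AbelianizationIdealGen

end FreeAlgebra

open FreeAlgebra in
/-- Donovan–Wemyss question (Theorem 1.2, case `n = 2`): if `f₁, f₂` are elements of
the free algebra on two generators, each a sum of words of degree two or higher, and
the quotient by the two-sided ideal `I = (f₁, f₂)` is finite dimensional over `K`,
then the quotient is not commutative: some commutator lies outside `I`. -/
theorem stmt13 {K : Type*} [Field K] (f₁ f₂ : FreeAlgebra K (Fin 2))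
    (h₁ : f₁ ∈ degGe2 K 2) (h₂ : f₂ ∈ degGe2 K 2)
    (I : Submodule K (FreeAlgebra K (Fin 2)))
    (hI : I = idealGen K 2 {f₁, f₂})
    (hfin : FiniteDimensional K (FreeAlgebra K (Fin 2) ⧸ I)) :
    ∃ a b : FreeAlgebra K (Fin 2), a * b - b * a ∉ I := by
  subst hI
  by_contra! hcomm
  have hf₁ := degGe2_le_augIdeal_pow_two 2 h₁
  have hf₂ := degGe2_le_augIdeal_pow_two 2 h₂
  obtain ⟨y, hy, w, hw, hyw⟩ :=
    Submodule.mem_sup.1 (idealGen_le_span_sup _ (hcomm (ι K 0) (ι K 1)))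
  obtain ⟨α, β, rfl⟩ := Submodule.mem_span_pair.1 hy
  by_cases hαβ : α = 0 ∧ β = 0
  · obtain ⟨rfl, rfl⟩ := hαβ
    refine commutator_not_mem_augIdeal_pow_three (K := K) (zero_ne_one : (0 : Fin 2) ≠ 1) ?_
    rw [← hyw, zero_smul, zero_smul, zero_add, zero_add]
    exact sup_le_augIdeal_pow_three (Submodule.span_le.2 (Set.pair_subset hf₁ hf₂)) hw
  · have hrel := toMvPolynomial_mem_idealOfVars_mul hw
    rw [← add_sub_cancel_left (α • f₁ + β • f₂) w, hyw, map_sub, toMvPolynomial_commutator,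
      zero_sub, neg_mem_iff, map_add, map_smul, map_smul, Set.image_pair] at hrel
    have hfinJ := finite_quotient_span_image (S := {f₁, f₂})
    rw [Set.image_pair] at hfinJ
    exact MvPolynomial.not_finite_quotient_span_pair (zero_ne_one : (0 : Fin 2) ≠ 1)
      (toMvPolynomial_mem_idealOfVars (algebraMapInv.ker_pow_two_le_ker hf₁))
      (toMvPolynomial_mem_idealOfVars (algebraMapInv.ker_pow_two_le_ker hf₂))
      (not_and_or.1 hαβ) hrel hfinJ
end
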